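/- Let A be a commutative multiplicative hyperring with identity that is not local, let Q be a strong 𝒞-hyperideal of A, and let u,v ∈ ℕ with u > v ≥ 2. Then Q is a (u,v)-absorbing prime hyperideal of A if and only if Q is a (u−1,v−1)-absorbing prime hyperideal of A. -/
import Mathlib


/-- A commutative multiplicative hyperring with identity: `(A,+)` is a commutative group,
`∘ = hmul` is a commutative associative hyperoperation with nonempty values, satisfying
`x∘(y+z) ⊆ x∘y + x∘z`, `x∘(−y) = (−x)∘y = −(x∘y)`, and `a ∈ a∘1` for all `a`. -/
class CommHyperring (A : Type*) [AddCommGroup A] [One A] where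
  hmul : A → A → Set A
  hmul_nonempty : ∀ x y : A, (hmul x y).Nonempty
  hmul_comm : ∀ x y : A, hmul x y = hmul y x
  hmul_assoc : ∀ x y z : A, (⋃ a ∈ hmul y z, hmul x a) = ⋃ b ∈ hmul x y, hmul b z
  hmul_add : ∀ x y z : A, hmul x (y + z) ⊆ Set.image2 (· + ·) (hmul x y) (hmul x z)
  hmul_neg : ∀ x y : A, hmul x (-y) = Neg.neg '' hmul x y
  neg_hmul : ∀ x y : A, hmul (-x) y = Neg.neg '' hmul x y
  one_mem : ∀ a : A, a ∈ hmul a 1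

open CommHyperring

variable {A : Type*} [AddCommGroup A] [One A] [CommHyperring A]

/-- The hyperoperation extended to subsets: `X∘Y = ⋃_{x∈X, y∈Y} x∘y`. -/
def sMul (X Y : Set A) : Set A := ⋃ x ∈ X, ⋃ y ∈ Y, hmul x y

/-- The product `x₁∘⋯∘xₙ` of the members of a list. -/
def hProd : List A → Set A
  | [] => {1}
  | [a] => {a}
  | a :: l => ⋃ c ∈ hProd l, hmul a c

/-- `xⁿ = x∘⋯∘x` (`n` factors). -/
def hPow (a : A) (n : ℕ) : Set A := hProd (List.replicate n a)

/-- `a` is a unit if `1 ∈ a∘b` for some `b`. -/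
def IsUnitH (a : A) : Prop := ∃ b : A, (1 : A) ∈ hmul a b

/-- A hyperideal of `A`. -/
def IsHyperideal (B : Set A) : Prop :=
  B.Nonempty ∧ (∀ x ∈ B, ∀ y ∈ B, x - y ∈ B) ∧ ∀ r : A, ∀ x ∈ B, hmul r x ⊆ B

def IsProperHyperideal (B : Set A) : Prop := IsHyperideal B ∧ B ≠ Set.univ

/-- A prime hyperideal. -/
def IsPrimeHyperideal (B : Set A) : Prop :=
  IsProperHyperideal B ∧ ∀ x y : A, hmul x y ⊆ B → x ∈ B ∨ y ∈ B

/-- The prime radical: the intersection of all prime hyperideals containing `B`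
(`= A` if there are none). -/
def radH (B : Set A) : Set A := ⋂₀ {P : Set A | IsPrimeHyperideal P ∧ B ⊆ P}

/-- A `𝒞`-hyperideal: meets a finite product `⇒` contains it. -/
def IsCHyperideal (B : Set A) : Prop :=
  IsHyperideal B ∧ ∀ l : List A, l ≠ [] → (hProd l ∩ B).Nonempty → hProd l ⊆ B

def setAdd (X Y : Set A) : Set A := Set.image2 (· + ·) X Y

/-- The sum `C₁ + ⋯ + Cₙ` of the finite products coded by a list of lists. -/
def sumProds (L : List (List A)) : Set A := L.foldr (fun l S => setAdd (hProd l) S) {0}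

/-- A strong `𝒞`-hyperideal: meets a finite sum of finite products `⇒` contains it. -/
def IsStrongCHyperideal (B : Set A) : Prop :=
  IsHyperideal B ∧ ∀ L : List (List A), L ≠ [] → (∀ l ∈ L, l ≠ []) →
    (sumProds L ∩ B).Nonempty → sumProds L ⊆ B

/-- A `v`-absorbing hyperideal. -/
def IsNAbsorbing (Q : Set A) (v : ℕ) : Prop :=
  IsProperHyperideal Q ∧ ∀ l : List A, l.length = v + 1 → hProd l ⊆ Q →
    ∃ l', l'.Sublist l ∧ l'.length = v ∧ hProd l' ⊆ Q

/-- A `(u,v)`-absorbing hyperideal. -/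
def IsUVAbsorbing (Q : Set A) (u v : ℕ) : Prop :=
  IsProperHyperideal Q ∧ ∀ l : List A, l.length = u → (∀ x ∈ l, ¬IsUnitH x) → hProd l ⊆ Q →
    ∃ l', l'.Sublist l ∧ l'.length = v ∧ hProd l' ⊆ Q

/-- An `AB`-`(u,v)`-absorbing hyperideal. -/
def IsABUVAbsorbing (Q : Set A) (u v : ℕ) : Prop :=
  IsProperHyperideal Q ∧ ∀ l : List A, l.length = u → hProd l ⊆ Q →
    ∃ l', l'.Sublist l ∧ l'.length = v ∧ hProd l' ⊆ Q

/-- A `(u,v)`-absorbing prime hyperideal. -/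
def IsUVAbsorbingPrime (Q : Set A) (u v : ℕ) : Prop :=
  IsProperHyperideal Q ∧ ∀ l : List A, l.length = u → (∀ x ∈ l, ¬IsUnitH x) → hProd l ⊆ Q →
    hProd (l.take v) ⊆ Q ∨ hProd (l.drop v) ⊆ Q

/-- A maximal hyperideal. -/
def IsMaximalHyperideal (M : Set A) : Prop :=
  IsProperHyperideal M ∧ ∀ B : Set A, IsHyperideal B → M ⊂ B → B = Set.univ

/-- `A` is local if it has exactly one maximal hyperideal. -/
def IsLocalH (A : Type*) [AddCommGroup A] [One A] [CommHyperring A] : Prop :=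
  ∃! M : Set A, IsMaximalHyperideal M

/-- `P` is a prime hyperideal minimal over `Q`. -/
def MinimalPrimeOver (Q P : Set A) : Prop :=
  IsPrimeHyperideal P ∧ Q ⊆ P ∧
    ∀ P' : Set A, IsPrimeHyperideal P' → Q ⊆ P' → P' ⊆ P → P' = P

/-- `Iⁿ = ⋃ {x₁∘⋯∘xₙ : xᵢ ∈ I}`. -/
def idealPow (I : Set A) (n : ℕ) : Set A :=
  ⋃ l ∈ {l : List A | l.length = n ∧ ∀ x ∈ l, x ∈ I}, hProd l

/-- `I₁∘⋯∘Iₙ = ⋃ {x₁∘⋯∘xₙ : xᵢ ∈ Iᵢ}`. -/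
def idealProd (L : List (Set A)) : Set A :=
  ⋃ l ∈ {l : List A | List.Forall₂ (· ∈ ·) l L}, hProd l

/-- `Abs(Q)`: the minimal `v` such that `Q` is `v`-absorbing. -/
noncomputable def AbsN (Q : Set A) : ℕ := sInf {v : ℕ | IsNAbsorbing Q v}

/-- `abs(Q)`: the minimal `v` such that `Q` is `(Abs(Q)+1, v)`-absorbing. -/
noncomputable def absN (Q : Set A) : ℕ := sInf {v : ℕ | IsUVAbsorbing Q (AbsN Q + 1) v}

/-- A primary hyperideal. -/
def IsPrimaryHyperideal (Q : Set A) : Prop :=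
  IsProperHyperideal Q ∧ ∀ x y : A, hmul x y ⊆ Q → x ∈ Q ∨ ∃ t : ℕ, 1 ≤ t ∧ hPow y t ⊆ Q

/-- `A` is a hyperfield if every nonzero element is a unit. -/
def IsHyperfield (A : Type*) [AddCommGroup A] [One A] [CommHyperring A] : Prop :=
  ∀ x : A, x ≠ 0 → IsUnitH x

/-- `(Q : x) = {a : a∘x ⊆ Q}`. -/
def colonH (Q : Set A) (x : A) : Set A := {a : A | hmul a x ⊆ Q}

/-- `J(A)`: the intersection of all maximal hyperideals of `A`. -/
def JacobsonH (A : Type*) [AddCommGroup A] [One A] [CommHyperring A] : Set A :=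
  ⋂₀ {M : Set A | IsMaximalHyperideal M}

section Aux

/-- If `a` is not a unit and `c ∈ a∘b`, then `c` is not a unit. -/
lemma nonunit_of_mem_hmul' {a b c : A} (ha : ¬IsUnitH a) (hc : c ∈ hmul a b) :
    ¬IsUnitH c := by
  rintro ⟨y, hy⟩
  apply ha
  have h1 : (1 : A) ∈ ⋃ t ∈ hmul a b, hmul t y := Set.mem_biUnion hc hy
  rw [← hmul_assoc] at h1
  obtain ⟨s, hs, h1'⟩ := Set.mem_iUnion₂.mp h1
  exact ⟨s, h1'⟩

lemma unit_mem_eq_univ {B : Set A} (hB : IsHyperideal B) {x : A} (hx : x ∈ B)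
    (hu : IsUnitH x) : B = Set.univ := by
  obtain ⟨y, hy⟩ := hu
  have h1 : (1 : A) ∈ B := hB.2.2 y x hx (by rw [hmul_comm y x]; exact hy)
  ext a
  simp only [Set.mem_univ, iff_true]
  exact hB.2.2 a 1 h1 (one_mem a)

lemma nonunit_of_mem_proper {B : Set A} (hB : IsProperHyperideal B) {x : A}
    (hx : x ∈ B) : ¬IsUnitH x :=
  fun hu => hB.2 (unit_mem_eq_univ hB.1 hx hu)

/-- In a non-local hyperring with a proper hyperideal, there are two nonunits whose
difference is a unit. -/
lemma exists_nonunits_sub_unit (hA : ¬IsLocalH A) {Q : Set A}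
    (hQ : IsProperHyperideal Q) :
    ∃ a b : A, ¬IsUnitH a ∧ ¬IsUnitH b ∧ IsUnitH (a - b) := by
  by_contra h
  push_neg at h
  apply hA
  set N : Set A := {x : A | ¬IsUnitH x} with hN
  have hNid : IsHyperideal N := by
    refine ⟨?_, ?_, ?_⟩
    · obtain ⟨q, hq⟩ := hQ.1.1
      exact ⟨q, nonunit_of_mem_proper hQ hq⟩
    · intro x hx y hy
      exact h x y hx hy
    · intro r x hx c hc
      rw [hmul_comm r x] at hc
      exact nonunit_of_mem_hmul' hx hc
  have hNproper : IsProperHyperideal N := by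
    refine ⟨hNid, fun huniv => ?_⟩
    have h1 : (1 : A) ∈ N := huniv ▸ Set.mem_univ 1
    exact h1 ⟨1, one_mem 1⟩
  refine ⟨N, ⟨hNproper, ?_⟩, ?_⟩
  · intro B hB hNB
    obtain ⟨x, hxB, hxN⟩ := Set.exists_of_ssubset hNB
    exact unit_mem_eq_univ hB hxB (not_not.mp hxN)
  · intro M hM
    have hMN : M ⊆ N := fun x hx => nonunit_of_mem_proper hM.1 hx
    by_contra hne
    exact hNproper.2 (hM.2 N hNid (Set.ssubset_iff_subset_ne.mpr ⟨hMN, hne⟩))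

lemma mem_of_unit_mul {B : Set A} (hB : IsHyperideal B) {w e : A}
    (hu : IsUnitH w) (hsub : hmul w e ⊆ B) : e ∈ B := by
  obtain ⟨y, hy⟩ := hu
  have h1 : e ∈ ⋃ s ∈ hmul w y, hmul e s := Set.mem_biUnion hy (one_mem e)
  rw [hmul_assoc] at h1
  obtain ⟨t, ht, he⟩ := Set.mem_iUnion₂.mp h1
  have htB : t ∈ B := hsub (by rw [hmul_comm w e]; exact ht)
  have := hB.2.2 y t htB
  rw [← hmul_comm t y] at this
  exact this he

lemma mem_of_unit_sub {Q : Set A} (hQ : IsHyperideal Q) {a b e : A}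
    (hab : IsUnitH (a - b)) (h1 : hmul a e ⊆ Q) (h2 : hmul b e ⊆ Q) : e ∈ Q := by
  apply mem_of_unit_mul hQ hab
  intro x hx
  rw [hmul_comm (a - b) e, sub_eq_add_neg] at hx
  obtain ⟨s, hs, t, ht, rfl⟩ := hmul_add e a (-b) hx
  rw [hmul_neg] at ht
  obtain ⟨t', ht', rfl⟩ := ht
  have hsQ : s ∈ Q := h1 (by rw [hmul_comm a e]; exact hs)
  have htQ : t' ∈ Q := h2 (by rw [hmul_comm b e]; exact ht')
  have := hQ.2.1 s hsQ t' htQ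
  simpa [sub_eq_add_neg] using this

lemma hProd_cons {a : A} (l : List A) (h : l ≠ []) :
    hProd (a :: l) = ⋃ c ∈ hProd l, hmul a c := by
  cases l with
  | nil => exact absurd rfl h
  | cons b t => rfl

lemma hProd_cons_cons (x₁ x₂ : A) (t : List A) :
    hProd (x₁ :: x₂ :: t) = ⋃ c ∈ hmul x₁ x₂, hProd (c :: t) := by
  cases t with
  | nil =>
    show (⋃ c ∈ hProd [x₂], hmul x₁ c) = ⋃ c ∈ hmul x₁ x₂, hProd [c]
    simp [hProd]
  | cons d s =>
    rw [hProd_cons (x₂ :: d :: s) (by simp), hProd_cons (d :: s) (by simp)]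
    have hrw : ∀ c : A, hProd (c :: d :: s) = ⋃ f ∈ hProd (d :: s), hmul c f :=
      fun c => hProd_cons (d :: s) (by simp)
    ext x
    constructor
    · intro hx
      obtain ⟨e, he, hx⟩ := Set.mem_iUnion₂.mp hx
      obtain ⟨f, hf, he⟩ := Set.mem_iUnion₂.mp he
      have hx2 : x ∈ ⋃ e ∈ hmul x₂ f, hmul x₁ e := Set.mem_biUnion he hx
      rw [hmul_assoc] at hx2
      obtain ⟨c, hc, hx3⟩ := Set.mem_iUnion₂.mp hx2
      refine Set.mem_biUnion hc ?_
      rw [hrw c]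
      exact Set.mem_biUnion hf hx3
    · intro hx
      obtain ⟨c, hc, hx⟩ := Set.mem_iUnion₂.mp hx
      rw [hrw c] at hx
      obtain ⟨f, hf, hx⟩ := Set.mem_iUnion₂.mp hx
      have hx2 : x ∈ ⋃ b ∈ hmul x₁ x₂, hmul b f := Set.mem_biUnion hc hx
      rw [← hmul_assoc] at hx2
      obtain ⟨e, he, hx3⟩ := Set.mem_iUnion₂.mp hx2
      exact Set.mem_biUnion (Set.mem_biUnion hf he) hx3

lemma hProd_cons_subset {B : Set A} (hB : IsHyperideal B) (a : A) {l : List A}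
    (hl : l ≠ []) (h : hProd l ⊆ B) : hProd (a :: l) ⊆ B := by
  rw [hProd_cons l hl]
  exact Set.iUnion₂_subset fun c hc => hB.2.2 a c (h hc)

end Aux

/-- for a strong `𝒞`-hyperideal `Q` of a non-local hyperring and
`u > v ≥ 2`, `Q` is `(u,v)`-absorbing prime iff `Q` is `(u-1,v-1)`-absorbing prime. -/
theorem uv_absorbing_prime_iff_pred (hA : ¬IsLocalH A) (Q : Set A)
    (hQ : IsStrongCHyperideal Q) (u v : ℕ) (h2v : 2 ≤ v) (hvu : v < u) :
    IsUVAbsorbingPrime Q u v ↔ IsUVAbsorbingPrime Q (u - 1) (v - 1) := by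
  obtain ⟨k, rfl⟩ : ∃ k, v = k + 2 := ⟨v - 2, by omega⟩
  obtain ⟨m, rfl⟩ : ∃ m, u = m + (k + 3) := ⟨u - (k + 3), by omega⟩
  have huv1 : m + (k + 3) - 1 = m + k + 2 := by omega
  have hvv1 : k + 2 - 1 = k + 1 := by omega
  rw [huv1, hvv1]
  constructor
  · rintro ⟨hprop, H⟩
    refine ⟨hprop, ?_⟩
    intro l hlen hnon hsub
    have hlne : l ≠ [] := by
      intro h; rw [h] at hlen; simp at hlen
    obtain ⟨a, b, ha, hb, hab⟩ := exists_nonunits_sub_unit hA hprop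
    have key : ∀ w : A, ¬IsUnitH w →
        hProd (w :: l.take (k + 1)) ⊆ Q ∨ hProd (l.drop (k + 1)) ⊆ Q := by
      intro w hw
      have := H (w :: l) (by simp [hlen]; omega)
        (by
          intro x hx
          rcases List.mem_cons.mp hx with rfl | hx
          · exact hw
          · exact hnon x hx)
        (hProd_cons_subset hprop.1 w hlne hsub)
      rwa [show k + 2 = (k + 1) + 1 from rfl, List.take_succ_cons,
        List.drop_succ_cons] at this
    rcases key a ha with hta | hd
    · rcases key b hb with htb | hd
      · left
        have htne : l.take (k + 1) ≠ [] := by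
          intro h
          have := congrArg List.length h
          simp [hlen] at this
        rw [hProd_cons (l.take (k + 1)) htne] at hta htb
        intro e he
        refine mem_of_unit_sub hprop.1 hab ?_ ?_
        · intro x hx; exact hta (Set.mem_biUnion he hx)
        · intro x hx; exact htb (Set.mem_biUnion he hx)
      · exact Or.inr hd
    · exact Or.inr hd
  · rintro ⟨hprop, H⟩
    refine ⟨hprop, ?_⟩
    intro l hlen hnon hsub
    match l, hlen with
    | x₁ :: x₂ :: r, hlen =>
    have hrlen : r.length = m + k + 1 := by simp at hlen; omega
    have hrne : r ≠ [] := by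
      intro h; rw [h] at hrlen; simp at hrlen
    have hcc := hProd_cons_cons x₁ x₂ r
    have hsub' : ∀ c ∈ hmul x₁ x₂, hProd (c :: r) ⊆ Q := by
      intro c hc x hx
      exact hsub (hcc ▸ Set.mem_biUnion hc hx)
    have key : ∀ c ∈ hmul x₁ x₂,
        hProd (c :: r.take k) ⊆ Q ∨ hProd (r.drop k) ⊆ Q := by
      intro c hc
      have := H (c :: r) (by simp [hrlen])
        (by
          intro x hx
          rcases List.mem_cons.mp hx with rfl | hx
          · exact nonunit_of_mem_hmul' (hnon x₁ (by simp)) hc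
          · exact hnon x (by simp [hx]))
        (hsub' c hc)
      rwa [show k + 1 = k + 1 from rfl, List.take_succ_cons,
        List.drop_succ_cons] at this
    rw [show k + 2 = (k + 1) + 1 from rfl, List.take_succ_cons,
      List.drop_succ_cons, List.take_succ_cons, List.drop_succ_cons]
    by_cases hd : hProd (r.drop k) ⊆ Q
    · exact Or.inr hd
    · left
      rw [hProd_cons_cons x₁ x₂ (r.take k)]
      refine Set.iUnion₂_subset fun c hc => ?_
      rcases key c hc with h1 | h2
      · exact h1
      · exact absurd h2 hd
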